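/- arXiv:2202.08723 — 3 statements merged into one kernel-verified Lean document; each statement's English description precedes it below -/
import Mathlib

section
/- Let X and Y be Banach spaces, A : X → Y a surjective continuous linear operator, and B : X → Y a compact continuous linear operator. Then the range of A + B is a closed subspace of Y. -/
/-!
By the open mapping theorem every `y` is `A x` with `‖x‖ ≤ C ‖y‖`, and compactness of `B` puts
`B x` within `‖y‖ / 2` of a fixed finite-dimensional subspace `V`, at a point of norm `O(‖y‖)`.
Hence `(x, v) ↦ (A + B) x + v` on `X × V` has approximate preimages with controlled norm, and
is therefore surjective by the iteration from the proof of the open mapping theorem. Finally,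
the preimage of `range (A + B)` under this quotient map contains `X × 0`, a closed subspace of
finite codimension, so it is closed, and so is `range (A + B)`.
-/

open Filter Function Metric Topology

namespace ContinuousLinearMap

variable {𝕜 E F : Type*} [NontriviallyNormedField 𝕜] [NormedAddCommGroup E] [NormedSpace 𝕜 E]
  [CompleteSpace E] [NormedAddCommGroup F] [NormedSpace 𝕜 F]

theorem surjective_of_approx_preimage_norm_le (f : E →L[𝕜] F) {C : ℝ}
    (h : ∀ y, ∃ x, dist (f x) y ≤ 1 / 2 * ‖y‖ ∧ ‖x‖ ≤ C * ‖y‖) : Surjective f := by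
  choose g hg using h
  intro y
  set r : ℕ → F := fun n ↦ (fun z ↦ z - f (g z))^[n] y
  have f_g_r : ∀ n, f (g (r n)) = r n - r (n + 1) := fun n ↦ by
    simp only [r, iterate_succ_apply', sub_sub_cancel]
  have r_le : ∀ n, ‖r n‖ ≤ (1 / 2) ^ n * ‖y‖ := by
    intro n
    induction n with
    | zero => simp [r]
    | succ n ih =>
      calc ‖r (n + 1)‖ = dist (f (g (r n))) (r n) := by
            rw [dist_eq_norm, f_g_r, sub_sub_cancel_left, norm_neg]
        _ ≤ 1 / 2 * ‖r n‖ := (hg _).1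
        _ ≤ (1 / 2) ^ (n + 1) * ‖y‖ := by rw [pow_succ']; grw [ih, mul_assoc]
  have r_tendsto : Tendsto r atTop (𝓝 0) :=
    squeeze_zero_norm r_le <| by
      simpa using (tendsto_pow_atTop_nhds_zero_of_lt_one (r := (1 / 2 : ℝ))
        (by norm_num) (by norm_num)).mul_const ‖y‖
  have g_r_summable : Summable fun n ↦ g (r n) := by
    refine .of_norm_bounded ((summable_geometric_two).mul_left (|C| * ‖y‖)) fun n ↦ ?_
    calc ‖g (r n)‖ ≤ C * ‖r n‖ := (hg _).2
      _ ≤ |C| * ((1 / 2) ^ n * ‖y‖) := by grw [le_abs_self C, r_le]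
      _ = |C| * ‖y‖ * (1 / 2) ^ n := by ring
  refine ⟨∑' n, g (r n), tendsto_nhds_unique (g_r_summable.hasSum.mapL f).tendsto_sum_nat ?_⟩
  simp only [f_g_r, Finset.sum_range_sub']
  simpa [r] using tendsto_const_nhds.sub r_tendsto

theorem isClosed_range_of_surjective_coprod [CompleteSpace 𝕜] [CompleteSpace F] {V : Type*}
    [NormedAddCommGroup V] [NormedSpace 𝕜 V] [FiniteDimensional 𝕜 V] (T : E →L[𝕜] F)
    (j : V →L[𝕜] F) (h : Surjective (T.coprod j)) : IsClosed (Set.range T) := by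
  have := FiniteDimensional.complete 𝕜 V
  have : FiniteDimensional 𝕜 ((E × V) ⧸ (snd 𝕜 E V : E × V →ₗ[𝕜] V).ker) :=
    ((snd 𝕜 E V : E × V →ₗ[𝕜] V).quotKerEquivOfSurjective
      Prod.snd_surjective).symm.finiteDimensional
  have ker_snd_le : (snd 𝕜 E V : E × V →ₗ[𝕜] V).ker ≤
      (T : E →ₗ[𝕜] F).range.comap (T.coprod j : E × V →ₗ[𝕜] F) := by
    rintro ⟨x, v⟩ (rfl : v = 0)
    exact ⟨x, by simp⟩
  rw [← (T.coprod j).isQuotientMap h |>.isClosed_preimage]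
  exact Submodule.isClosed_mono_of_finiteDimensional_quotient
    (snd 𝕜 E V).isClosed_ker ker_snd_le

end ContinuousLinearMap

theorem IsCompactOperator.exists_finiteDimensional_approx {X Y : Type*} [NormedAddCommGroup X]
    [NormedSpace ℝ X] [NormedAddCommGroup Y] [NormedSpace ℝ Y] {B : X →L[ℝ] Y}
    (hB : IsCompactOperator B) {ε : ℝ} (hε : 0 < ε) :
    ∃ V : Submodule ℝ Y, FiniteDimensional ℝ V ∧
      ∃ R, ∀ x, ∃ v ∈ V, ‖B x - v‖ ≤ ε * ‖x‖ ∧ ‖v‖ ≤ R * ‖x‖ := by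
  set K := closure (B '' closedBall 0 1)
  have hK : IsCompact K := hB.isCompact_closure_image_closedBall 1
  obtain ⟨t, htK, ht, hKt⟩ := finite_approx_of_totallyBounded hK.totallyBounded ε hε
  obtain ⟨R, hR⟩ := hK.isBounded.exists_norm_le
  refine ⟨Submodule.span ℝ t, FiniteDimensional.span_of_finite ℝ ht, R, fun x ↦ ?_⟩
  rcases eq_or_ne x 0 with rfl | hx
  · exact ⟨0, zero_mem _, by simp, by simp⟩
  have hx' : ‖x‖⁻¹ • x ∈ closedBall (0 : X) 1 := by
    simp [norm_smul, inv_mul_cancel₀ (norm_ne_zero_iff.mpr hx)]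
  obtain ⟨k, hkt, hk⟩ := Set.mem_iUnion₂.mp (hKt (subset_closure ⟨_, hx', rfl⟩))
  have hBx : B x = ‖x‖ • B (‖x‖⁻¹ • x) := by
    rw [map_smul, smul_smul, mul_inv_cancel₀ (norm_ne_zero_iff.mpr hx), one_smul]
  refine ⟨‖x‖ • k, Submodule.smul_mem _ _ (Submodule.subset_span hkt), ?_, ?_⟩
  · rw [hBx, ← smul_sub, norm_smul, norm_norm, mul_comm, ← dist_eq_norm]
    exact mul_le_mul_of_nonneg_right (mem_ball.mp hk).le (norm_nonneg x)
  · rw [norm_smul, norm_norm, mul_comm]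
    exact mul_le_mul_of_nonneg_right (hR k (htK hkt)) (norm_nonneg x)

/-- Let `X` and `Y` be Banach spaces, `A : X → Y` a surjective continuous linear operator,
and `B : X → Y` a compact continuous linear operator. Then the range of `A + B` is closed. -/
theorem closed_range_of_surjective_add_compact
    {X Y : Type*} [NormedAddCommGroup X] [NormedSpace ℝ X] [CompleteSpace X]
    [NormedAddCommGroup Y] [NormedSpace ℝ Y] [CompleteSpace Y]
    (A B : X →L[ℝ] Y) (hA : Function.Surjective A) (hB : IsCompactOperator B) :
    IsClosed (Set.range (A + B)) := by
  obtain ⟨C, hC, hAC⟩ := A.exists_preimage_norm_le hA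
  obtain ⟨V, hV, R, hBR⟩ := hB.exists_finiteDimensional_approx (ε := 1 / (2 * C)) (by positivity)
  refine (A + B).isClosed_range_of_surjective_coprod V.subtypeL <|
    ContinuousLinearMap.surjective_of_approx_preimage_norm_le _ (C := max 1 R * C) fun y ↦ ?_
  obtain ⟨x, rfl, hx⟩ := hAC y
  obtain ⟨v, hv, hBv, hvR⟩ := hBR x
  refine ⟨(x, -⟨v, hv⟩), ?_, ?_⟩
  · calc dist ((A + B).coprod V.subtypeL (x, -⟨v, hv⟩)) (A x) = ‖B x - v‖ := by
          rw [dist_eq_norm]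
          congr 1
          simp only [ContinuousLinearMap.coprod_apply, add_apply,
            Submodule.coe_subtypeL, Submodule.subtype_apply, NegMemClass.coe_neg]
          abel
      _ ≤ 1 / (2 * C) * (C * ‖A x‖) := by grw [hBv, hx]
      _ = 1 / 2 * ‖A x‖ := by field_simp
  · calc ‖((x, -⟨v, hv⟩) : X × V)‖ ≤ max 1 R * ‖x‖ := by
          refine max_le (le_mul_of_one_le_left (norm_nonneg _) (le_max_left _ _)) ?_
          simpa using hvR.trans (mul_le_mul_of_nonneg_right (le_max_right _ _) (norm_nonneg _))
      _ ≤ max 1 R * C * ‖A x‖ := by grw [hx, mul_assoc]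
end

section
/- Let X and Y be Banach spaces, A : X → Y a surjective continuous linear operator, and B : X → Y a compact continuous linear operator. Then the kernel of the adjoint operator A* + B* : Y* → X* is finite-dimensional. -/
/-! By the open mapping theorem the adjoint `A*` of the surjection `A` is bounded below, and by
Schauder's theorem `B*` is compact. On the Banach space `ker (A* + B*)` the map `A*` agrees with
the compact map `-B*`. A compact operator that is bounded below on a Banach space is a closed
embedding, so it pulls a compact neighbourhood of `0` back to one: its domain is locally compact,
hence finite-dimensional. -/

open NormedSpace

/-- The Banach-space adjoint (transpose) of a continuous linear map. -/
noncomputable def banachAdjoint {X Y : Type*} [NormedAddCommGroup X] [NormedSpace ℝ X]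
    [NormedAddCommGroup Y] [NormedSpace ℝ Y] (A : X →L[ℝ] Y) :
    StrongDual ℝ Y →L[ℝ] StrongDual ℝ X :=
  (ContinuousLinearMap.compL ℝ X Y ℝ).flip A

open Metric BoundedContinuousFunction

open scoped NNReal

theorem TotallyBounded.image_of_dist_le {α β γ : Type*} [PseudoMetricSpace β]
    [PseudoMetricSpace γ] {s : Set α} {f : α → β} {g : α → γ} (hg : TotallyBounded (g '' s))
    (hfg : ∀ a ∈ s, ∀ b ∈ s, dist (f a) (f b) ≤ dist (g a) (g b)) :
    TotallyBounded (f '' s) := by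
  rw [Metric.totallyBounded_iff]
  intro ε hε
  obtain ⟨t, hts, htfin, hcov⟩ := Metric.finite_approx_of_totallyBounded hg ε hε
  choose a has hga using fun z : t => hts z.2
  have : Finite t := htfin
  refine ⟨Set.range (f ∘ a), Set.finite_range _, ?_⟩
  rintro _ ⟨b, hb, rfl⟩
  obtain ⟨z, hz, hbz⟩ := Set.mem_iUnion₂.1 (hcov ⟨b, hb, rfl⟩)
  refine Set.mem_iUnion₂.2 ⟨f (a ⟨z, hz⟩), ⟨⟨z, hz⟩, rfl⟩, ?_⟩
  calc dist (f b) (f (a ⟨z, hz⟩)) ≤ dist (g b) (g (a ⟨z, hz⟩)) := hfg b hb _ (has _)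
    _ < ε := by rwa [hga]

section FiniteDimensional

variable {𝕜 E F : Type*} [NontriviallyNormedField 𝕜] [CompleteSpace 𝕜]
  [NormedAddCommGroup E] [NormedSpace 𝕜 E] [CompleteSpace E]
  [NormedAddCommGroup F] [NormedSpace 𝕜 F]

theorem FiniteDimensional.of_antilipschitz_of_isCompactOperator {f : E →L[𝕜] F} {K : ℝ≥0}
    (hf : AntilipschitzWith K f) (hfc : IsCompactOperator f) : FiniteDimensional 𝕜 E := by
  obtain ⟨C, hC, hfC⟩ := hfc
  exact .of_isCompactOperator_id
    ⟨f ⁻¹' C, (hf.isClosedEmbedding f.uniformContinuous).isCompact_preimage hC, hfC⟩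

theorem finiteDimensional_ker_add_of_antilipschitz_of_isCompactOperator {S T : E →L[𝕜] F}
    {K : ℝ≥0} (hS : AntilipschitzWith K S) (hT : IsCompactOperator T) :
    FiniteDimensional 𝕜 (LinearMap.ker (S + T).toLinearMap) := by
  set N := LinearMap.ker (S + T).toLinearMap
  have : CompleteSpace N := (ContinuousLinearMap.isClosed_ker (S + T)).completeSpace_coe
  have hSN : S ∘L N.subtypeL = -(T ∘L N.subtypeL) := by
    ext ⟨x, hx⟩
    exact eq_neg_of_add_eq_zero_left hx
  refine .of_antilipschitz_of_isCompactOperator (f := S ∘L N.subtypeL)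
    (hS.comp (AntilipschitzWith.subtype_coe (N : Set E))) ?_
  rw [hSN]
  exact (hT.comp_clm _).neg

end FiniteDimensional

section restrictCompact

variable {𝕜 Y : Type*} [NontriviallyNormedField 𝕜] [NormedAddCommGroup Y] [NormedSpace 𝕜 Y]
  (K : Set Y) [CompactSpace K]

noncomputable def StrongDual.restrictCompact (f : StrongDual 𝕜 Y) : K →ᵇ 𝕜 :=
  mkOfCompact ⟨fun y => f y, by fun_prop⟩

theorem StrongDual.dist_apply_le_dist_restrictCompact (f g : StrongDual 𝕜 Y) {y : Y}
    (hy : y ∈ K) : dist (f y) (g y) ≤ dist (restrictCompact K f) (restrictCompact K g) :=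
  dist_coe_le_dist (f := restrictCompact K f) (g := restrictCompact K g) ⟨y, hy⟩

theorem StrongDual.isCompact_closure_restrictCompact_image_closedBall [ProperSpace 𝕜] :
    IsCompact (closure (restrictCompact K '' closedBall (0 : StrongDual 𝕜 Y) 1)) := by
  obtain ⟨M, hM⟩ := (isCompact_iff_compactSpace (s := K)).2 ‹_›
    |>.isBounded.subset_closedBall 0
  refine arzela_ascoli (closedBall 0 M) (isCompact_closedBall 0 M) _ ?_ ?_
  · rintro _ y ⟨f, hf, rfl⟩
    rw [mem_closedBall_zero_iff] at hf ⊢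
    calc ‖f y‖ ≤ ‖f‖ * ‖(y : Y)‖ := f.le_opNorm y
      _ ≤ 1 * M := by
        gcongr
        exact mem_closedBall_zero_iff.1 (hM y.2)
      _ = M := one_mul M
  · refine (LipschitzWith.uniformEquicontinuous _ 1 ?_).equicontinuous
    rintro ⟨_, f, hf, rfl⟩
    have hf : ‖f‖₊ ≤ 1 := mem_closedBall_zero_iff.1 hf
    exact (mul_one (1 : ℝ≥0)) ▸ (f.lipschitz.weaken hf).comp (LipschitzWith.subtype_val K)

end restrictCompact

section banachAdjoint

variable {X Y : Type*} [NormedAddCommGroup X] [NormedSpace ℝ X]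
  [NormedAddCommGroup Y] [NormedSpace ℝ Y]

theorem antilipschitz_banachAdjoint_of_surjective [CompleteSpace X] [CompleteSpace Y]
    {A : X →L[ℝ] Y} (hA : Function.Surjective A) :
    ∃ K, AntilipschitzWith K (banachAdjoint A) := by
  obtain ⟨C, hC0, hC⟩ := A.exists_preimage_norm_le hA
  refine ⟨⟨C, hC0.le⟩, (banachAdjoint A).antilipschitz_of_bound fun f =>
    f.opNorm_le_bound (by positivity) fun y => ?_⟩
  obtain ⟨x, rfl, hx⟩ := hC y
  calc ‖f (A x)‖ = ‖banachAdjoint A f x‖ := rfl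
    _ ≤ ‖banachAdjoint A f‖ * ‖x‖ := (banachAdjoint A f).le_opNorm x
    _ ≤ ‖banachAdjoint A f‖ * (C * ‖A x‖) := by gcongr
    _ = C * ‖banachAdjoint A f‖ * ‖A x‖ := by ring

theorem norm_banachAdjoint_le {B : X →L[ℝ] Y} {K : Set Y} (hK : B '' closedBall 0 1 ⊆ K)
    (f : StrongDual ℝ Y) {c : ℝ} (hc : 0 ≤ c) (hf : ∀ y ∈ K, ‖f y‖ ≤ c) :
    ‖banachAdjoint B f‖ ≤ c :=
  ContinuousLinearMap.opNorm_le_of_unit_norm hc fun x hx =>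
    hf _ (hK ⟨x, by simp [hx], rfl⟩)

/-- Schauder: restricting the unit ball of `Y*` to the compact set `K = closure (B (closedBall 0 1))`
gives a relatively compact family by Arzelà–Ascoli, and `‖B* f - B* g‖` is at most the sup
distance of `f` and `g` on `K`. -/
theorem IsCompactOperator.banachAdjoint {B : X →L[ℝ] Y} (hB : IsCompactOperator B) :
    IsCompactOperator (banachAdjoint B) := by
  set K := closure (B '' closedBall 0 1)
  have : CompactSpace K := isCompact_iff_compactSpace.1 (hB.isCompact_closure_image_closedBall 1)
  set R := StrongDual.restrictCompact (𝕜 := ℝ) K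
  have hdist : ∀ f g, dist (_root_.banachAdjoint B f) (_root_.banachAdjoint B g) ≤
      dist (R f) (R g) := by
    intro f g
    rw [dist_eq_norm, ← map_sub]
    refine norm_banachAdjoint_le subset_closure _ dist_nonneg fun y hy => ?_
    rw [_root_.sub_apply, ← dist_eq_norm]
    exact StrongDual.dist_apply_le_dist_restrictCompact K f g hy
  have hR := StrongDual.isCompact_closure_restrictCompact_image_closedBall (𝕜 := ℝ) K
  refine (isCompactOperator_iff_exists_mem_nhds_isCompact_closure_image _).2
    ⟨closedBall 0 1, closedBall_mem_nhds _ one_pos, ?_⟩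
  exact ((hR.totallyBounded.subset subset_closure).image_of_dist_le
    fun f _ g _ => hdist f g).closure.isCompact_of_isClosed isClosed_closure

end banachAdjoint

/-- Let `X` and `Y` be Banach spaces, `A : X → Y` a surjective continuous linear operator,
and `B : X → Y` a compact continuous linear operator. Then the kernel of the adjoint
operator `A* + B* : Y* → X*` is finite-dimensional. -/
theorem finiteDimensional_ker_adjoint_add
    {X Y : Type*} [NormedAddCommGroup X] [NormedSpace ℝ X] [CompleteSpace X]
    [NormedAddCommGroup Y] [NormedSpace ℝ Y] [CompleteSpace Y]
    (A B : X →L[ℝ] Y) (hA : Function.Surjective A) (hB : IsCompactOperator B) :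
    FiniteDimensional ℝ (LinearMap.ker (banachAdjoint A + banachAdjoint B).toLinearMap) := by
  obtain ⟨K, hK⟩ := antilipschitz_banachAdjoint_of_surjective hA
  exact finiteDimensional_ker_add_of_antilipschitz_of_isCompactOperator hK hB.banachAdjoint
end

section
/- For κ > 0, every eigenvalue λ_{k,κ} of the operator A_κ g = −g'' − π²g + 2κφ₁²g with Dirichlet boundary conditions on (0,1) is strictly positive. -/
/-!
Picone's identity with the positive ground state `φ x = sin (π x)` of `-d²/dx² - π²`: the function
`F = g g' - g² φ'/φ` has `F' = (g' - g φ'/φ)² + (4κ sin² (π x) - μ) g²`, which for `μ ≤ 0` is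
nonnegative, and positive wherever `g ≠ 0`. The equation bounds `g''`, hence `g'`, so that `g`
vanishes linearly at `0` and `1`, while `φ'/φ` blows up only like the inverse distance to the
boundary; thus the monotone function `F` tends to `0` at both ends, so `F ≡ 0`, a contradiction.
-/

open Real Filter Set Topology

theorem abs_sub_le_mul_of_abs_hasDerivAt_le {f f' : ℝ → ℝ} {a b C : ℝ} (hab : a ≤ b)
    (hf : ContinuousOn f (Icc a b)) (hf' : ∀ x ∈ Ioo a b, HasDerivAt f (f' x) x)
    (hC : ∀ x ∈ Ioo a b, |f' x| ≤ C) : |f b - f a| ≤ C * (b - a) := by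
  rcases hab.eq_or_lt with rfl | hab
  · simp
  obtain ⟨c, hc, hslope⟩ := exists_hasDerivAt_eq_slope f f' hab hf hf'
  have hba : 0 < b - a := sub_pos.2 hab
  have := hC c hc
  rwa [hslope, abs_div, abs_of_pos hba, div_le_iff₀ hba] at this

theorem exists_abs_le_of_abs_hasDerivAt_le {f f' : ℝ → ℝ} {a b C : ℝ}
    (hf : ∀ x ∈ Ioo a b, HasDerivAt f (f' x) x) (hC : ∀ x ∈ Ioo a b, |f' x| ≤ C) :
    ∃ M, ∀ x ∈ Ioo a b, |f x| ≤ M := by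
  rcases (Ioo a b).eq_empty_or_nonempty with hempty | ⟨m, hm⟩
  · exact ⟨0, by simp [hempty]⟩
  refine ⟨|f m| + C * (b - a), fun x hx => ?_⟩
  have hlip := (convex_Ioo a b).norm_image_sub_le_of_norm_hasDerivWithin_le
    (fun y hy => (hf y hy).hasDerivWithinAt) hC hm hx
  have hxm : |x - m| ≤ b - a := abs_sub_le_of_le_of_le hx.1.le hx.2.le hm.1.le hm.2.le
  have hC0 : 0 ≤ C := (abs_nonneg _).trans (hC m hm)
  have := abs_sub_abs_le_abs_sub (f x) (f m)
  simp only [Real.norm_eq_abs] at hlip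
  nlinarith [mul_le_mul_of_nonneg_left hxm hC0]

theorem exists_abs_deriv_le_and_abs_le_mul_min {g g' g'' : ℝ → ℝ} {a b Q : ℝ}
    (hg : ContinuousOn g (Icc a b))
    (hder : ∀ x ∈ Ioo a b, HasDerivAt g (g' x) x ∧ HasDerivAt g' (g'' x) x)
    (hga : g a = 0) (hgb : g b = 0) (hQ : ∀ x ∈ Ioo a b, |g'' x| ≤ Q * |g x|) :
    ∃ M, (∀ x ∈ Ioo a b, |g' x| ≤ M) ∧ ∀ x ∈ Icc a b, |g x| ≤ M * min (x - a) (b - x) := by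
  obtain ⟨B, hB⟩ := isCompact_Icc.exists_bound_of_continuousOn hg
  have hg'' : ∀ x ∈ Ioo a b, |g'' x| ≤ |Q| * B := fun x hx =>
    calc |g'' x| ≤ Q * |g x| := hQ x hx
      _ ≤ |Q| * |g x| := by gcongr; exact le_abs_self Q
      _ ≤ |Q| * B := by gcongr; exact hB x (Ioo_subset_Icc_self hx)
  obtain ⟨M, hM⟩ := exists_abs_le_of_abs_hasDerivAt_le (fun x hx => (hder x hx).2) hg''
  refine ⟨M, hM, fun x hx => ?_⟩
  have hleft : |g x| ≤ M * (x - a) := by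
    simpa [hga] using abs_sub_le_mul_of_abs_hasDerivAt_le hx.1
      (hg.mono (Icc_subset_Icc_right hx.2)) (fun y hy => (hder y ⟨hy.1, hy.2.trans_le hx.2⟩).1)
      (fun y hy => hM y ⟨hy.1, hy.2.trans_le hx.2⟩)
  have hright : |g x| ≤ M * (b - x) := by
    simpa [hgb, abs_neg] using abs_sub_le_mul_of_abs_hasDerivAt_le hx.2
      (hg.mono (Icc_subset_Icc_left hx.1)) (fun y hy => (hder y ⟨hx.1.trans_lt hy.1, hy.2⟩).1)
      (fun y hy => hM y ⟨hx.1.trans_lt hy.1, hy.2⟩)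
  rcases min_choice (x - a) (b - x) with h | h <;> rw [h] <;> assumption

theorem sin_pi_mul_pos {x : ℝ} (hx : x ∈ Ioo (0 : ℝ) 1) : 0 < sin (π * x) :=
  sin_pos_of_pos_of_lt_pi (mul_pos pi_pos hx.1) (mul_lt_of_lt_one_right pi_pos hx.2)

theorem two_mul_min_le_sin_pi_mul {x : ℝ} (hx : x ∈ Icc (0 : ℝ) 1) :
    2 * min x (1 - x) ≤ sin (π * x) := by
  rcases le_total x (1 / 2) with h | h
  · have := le_sin_mul (x := 2 * x) (by linarith [hx.1]) (by linarith)
    calc 2 * min x (1 - x) ≤ 2 * x := by gcongr; exact min_le_left _ _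
      _ ≤ sin (π * x) := by convert this using 2; ring
  · have := le_sin_mul (x := 2 * (1 - x)) (by linarith [hx.2]) (by linarith)
    calc 2 * min x (1 - x) ≤ 2 * (1 - x) := by gcongr; exact min_le_right _ _
      _ ≤ sin (π - π * x) := by convert this using 2; ring
      _ = sin (π * x) := sin_pi_sub _

theorem MonotoneOn.eqOn_of_tendsto {β : Type*} [TopologicalSpace β] [PartialOrder β]
    [OrderClosedTopology β] {f : ℝ → β} {a b : ℝ} {L : β} (hf : MonotoneOn f (Ioo a b))
    (ha : Tendsto f (𝓝[>] a) (𝓝 L)) (hb : Tendsto f (𝓝[<] b) (𝓝 L)) :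
    EqOn f (fun _ => L) (Ioo a b) := by
  intro x hx
  apply le_antisymm
  · refine ge_of_tendsto hb ?_
    filter_upwards [Ioo_mem_nhdsLT hx.2] with y hy
    exact hf hx ⟨hx.1.trans hy.1, hy.2⟩ hy.1.le
  · refine le_of_tendsto ha ?_
    filter_upwards [Ioo_mem_nhdsGT hx.1] with y hy
    exact hf ⟨hy.1, hy.2.trans hx.2⟩ hx hy.2.le

noncomputable def picone (g g' φ φ' : ℝ → ℝ) (x : ℝ) : ℝ := g x * g' x - g x ^ 2 * (φ' x / φ x)

theorem hasDerivAt_picone {g g' φ φ' : ℝ → ℝ} {g'' φ'' x : ℝ}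
    (hg : HasDerivAt g (g' x) x) (hg' : HasDerivAt g' g'' x)
    (hφ : HasDerivAt φ (φ' x) x) (hφ' : HasDerivAt φ' φ'' x) (hφx : φ x ≠ 0) :
    HasDerivAt (picone g g' φ φ')
      ((g' x - g x * (φ' x / φ x)) ^ 2 + g x * g'' - g x ^ 2 * (φ'' / φ x)) x := by
  refine ((hg.mul hg').sub ((hg.pow 2).mul (hφ'.div hφ hφx))).congr_deriv ?_
  simp only [Pi.pow_apply, Pi.div_apply]
  field_simp
  ring

theorem hasDerivAt_picone_sin {g g' : ℝ → ℝ} {g'' q x : ℝ} (hx : sin (π * x) ≠ 0)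
    (hg : HasDerivAt g (g' x) x) (hg' : HasDerivAt g' g'' x) (heq : g'' = (q - π ^ 2) * g x) :
    HasDerivAt (picone g g' (fun y => sin (π * y)) (fun y => π * cos (π * y)))
      ((g' x - g x * (π * cos (π * x) / sin (π * x))) ^ 2 + q * g x ^ 2) x := by
  have hπx : HasDerivAt (fun y => π * y) π x := by simpa using (hasDerivAt_id x).const_mul π
  have hsin : HasDerivAt (fun y => sin (π * y)) (π * cos (π * x)) x := by
    simpa [mul_comm] using hπx.sin
  have hcos : HasDerivAt (fun y => π * cos (π * y)) (-(π ^ 2 * sin (π * x))) x :=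
    (hπx.cos.const_mul π).congr_deriv (by ring)
  convert hasDerivAt_picone hg hg' hsin hcos hx using 1
  rw [heq]
  field_simp
  ring

theorem abs_picone_sin_le {g g' : ℝ → ℝ} {M x : ℝ} (hx : x ∈ Ioo (0 : ℝ) 1)
    (hg' : |g' x| ≤ M) (hg : |g x| ≤ M * min x (1 - x)) :
    |picone g g' (fun y => sin (π * y)) (fun y => π * cos (π * y)) x|
      ≤ M ^ 2 * (1 + π / 2) * min x (1 - x) := by
  have hd : 0 < min x (1 - x) := lt_min hx.1 (by linarith [hx.2])
  have hs : 2 * min x (1 - x) ≤ sin (π * x) := two_mul_min_le_sin_pi_mul (Ioo_subset_Icc_self hx)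
  have hM : 0 ≤ M := (abs_nonneg _).trans hg'
  have hquot : |g x / sin (π * x)| ≤ M / 2 := by
    rw [abs_div, abs_of_pos (show 0 < sin (π * x) by linarith),
      div_le_div_iff₀ (by linarith) two_pos]
    nlinarith
  have hcos : |π * cos (π * x)| ≤ π := by
    rw [abs_mul, abs_of_pos pi_pos]
    exact mul_le_of_le_one_right pi_pos.le (abs_cos_le_one _)
  have hfactor : |g' x - g x / sin (π * x) * (π * cos (π * x))| ≤ M * (1 + π / 2) :=
    calc _ ≤ |g' x| + |g x / sin (π * x)| * |π * cos (π * x)| := by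
          rw [← abs_mul]; exact abs_sub _ _
      _ ≤ M + M / 2 * π := by gcongr
      _ = M * (1 + π / 2) := by ring
  calc _ = |g x| * |g' x - g x / sin (π * x) * (π * cos (π * x))| := by
        rw [← abs_mul, picone]; ring_nf
    _ ≤ M * min x (1 - x) * (M * (1 + π / 2)) := by gcongr
    _ = M ^ 2 * (1 + π / 2) * min x (1 - x) := by ring

theorem tendsto_zero_of_abs_le_mul_min {f : ℝ → ℝ} {a b K : ℝ} (hab : a < b)
    (hf : ∀ x ∈ Ioo a b, |f x| ≤ K * min (x - a) (b - x)) :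
    Tendsto f (𝓝[>] a) (𝓝 0) ∧ Tendsto f (𝓝[<] b) (𝓝 0) := by
  have hbound : Continuous fun x => K * min (x - a) (b - x) := by fun_prop
  constructor
  · refine squeeze_zero_norm' ?_
      (by simpa [hab.le] using (hbound.tendsto a).mono_left nhdsWithin_le_nhds)
    filter_upwards [Ioo_mem_nhdsGT hab] with x hx using hf x hx
  · refine squeeze_zero_norm' ?_
      (by simpa [hab.le] using (hbound.tendsto b).mono_left nhdsWithin_le_nhds)
    filter_upwards [Ioo_mem_nhdsLT hab] with x hx using hf x hx

theorem eqOn_zero_of_dirichlet_of_potential_pos {g g' g'' q : ℝ → ℝ} {Q : ℝ}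
    (hg : ContinuousOn g (Icc 0 1))
    (hder : ∀ x ∈ Ioo (0 : ℝ) 1, HasDerivAt g (g' x) x ∧ HasDerivAt g' (g'' x) x)
    (hg0 : g 0 = 0) (hg1 : g 1 = 0) (hq : ∀ x ∈ Ioo (0 : ℝ) 1, 0 < q x)
    (hqQ : ∀ x ∈ Ioo (0 : ℝ) 1, q x ≤ Q) (heq : ∀ x ∈ Ioo (0 : ℝ) 1, g'' x = (q x - π ^ 2) * g x) :
    EqOn g 0 (Ioo 0 1) := by
  intro x₀ hx₀
  by_contra hgx₀
  have hg'' : ∀ x ∈ Ioo (0 : ℝ) 1, |g'' x| ≤ (Q + π ^ 2) * |g x| := fun x hx => by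
    rw [heq x hx, abs_mul]
    gcongr
    exact abs_le.2 ⟨by linarith [hq x hx, hqQ x hx], by linarith [hq x hx, hqQ x hx, sq_nonneg π]⟩
  obtain ⟨M, hg'M, hgM⟩ := exists_abs_deriv_le_and_abs_le_mul_min hg hder hg0 hg1 hg''
  set F := picone g g' (fun y => sin (π * y)) (fun y => π * cos (π * y))
  have hF : ∀ x ∈ Ioo (0 : ℝ) 1, HasDerivAt F
      ((g' x - g x * (π * cos (π * x) / sin (π * x))) ^ 2 + q x * g x ^ 2) x := fun x hx =>
    hasDerivAt_picone_sin (sin_pi_mul_pos hx).ne' (hder x hx).1 (hder x hx).2 (heq x hx)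
  have hmono : MonotoneOn F (Ioo 0 1) := by
    refine monotoneOn_of_hasDerivWithinAt_nonneg (convex_Ioo 0 1)
      (fun x hx => (hF x hx).continuousAt.continuousWithinAt)
      (by rw [interior_Ioo]; exact fun x hx => (hF x hx).hasDerivWithinAt) ?_
    rw [interior_Ioo]
    exact fun x hx => add_nonneg (sq_nonneg _) (mul_nonneg (hq x hx).le (sq_nonneg _))
  obtain ⟨hF0, hF1⟩ := tendsto_zero_of_abs_le_mul_min (f := F) zero_lt_one fun x hx => by
    simpa using abs_picone_sin_le hx (hg'M x hx) (by simpa using hgM x (Ioo_subset_Icc_self hx))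
  have hF₀ : HasDerivAt F 0 x₀ :=
    (hasDerivAt_const x₀ 0).congr_of_eventuallyEq
      (eventually_of_mem (isOpen_Ioo.mem_nhds hx₀) (hmono.eqOn_of_tendsto hF0 hF1))
  have := (hF x₀ hx₀).unique hF₀
  nlinarith [sq_nonneg (g' x₀ - g x₀ * (π * cos (π * x₀) / sin (π * x₀))),
    mul_pos (hq x₀ hx₀) (pow_two_pos_of_ne_zero hgx₀)]

/-- For `κ > 0`, every eigenvalue `μ` of `A_κ g = −g'' − π² g + 2κ φ₁² g` with Dirichlet
boundary conditions on `(0,1)` is strictly positive. -/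
theorem eigenvalue_pos_of_kappa_pos
    (κ : ℝ) (hκ : 0 < κ)
    (φ₁ : ℝ → ℝ) (hφ₁ : ∀ x, φ₁ x = Real.sqrt 2 * Real.sin (π * x))
    (μ : ℝ) (g g' g'' : ℝ → ℝ)
    (hgcont : ContinuousOn g (Set.Icc 0 1))
    (hder : ∀ x ∈ Set.Ioo (0 : ℝ) 1, HasDerivAt g (g' x) x ∧ HasDerivAt g' (g'' x) x)
    (hbc0 : g 0 = 0) (hbc1 : g 1 = 0)
    (hne : ∃ x ∈ Set.Ioo (0 : ℝ) 1, g x ≠ 0)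
    (heig : ∀ x ∈ Set.Ioo (0 : ℝ) 1,
      -(g'' x) - π ^ 2 * g x + 2 * κ * (φ₁ x) ^ 2 * g x = μ * g x) :
    0 < μ := by
  by_contra! hμ
  obtain ⟨x₀, hx₀, hgx₀⟩ := hne
  have hpos : ∀ x ∈ Ioo (0 : ℝ) 1, 0 < 4 * κ * sin (π * x) ^ 2 - μ := fun x hx => by
    have := sin_pi_mul_pos hx
    have : 0 < 4 * κ * sin (π * x) ^ 2 := by positivity
    linarith
  have hbound : ∀ x ∈ Ioo (0 : ℝ) 1, 4 * κ * sin (π * x) ^ 2 - μ ≤ 4 * κ - μ := fun x _ => by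
    have := sin_sq_le_one (π * x)
    nlinarith
  have hode : ∀ x ∈ Ioo (0 : ℝ) 1, g'' x = (4 * κ * sin (π * x) ^ 2 - μ - π ^ 2) * g x :=
    fun x hx => by
      have h := heig x hx
      rw [hφ₁, mul_pow, sq_sqrt zero_le_two] at h
      linarith
  exact hgx₀ (eqOn_zero_of_dirichlet_of_potential_pos hgcont hder hbc0 hbc1 hpos hbound hode hx₀)
end
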